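/- arXiv:2412.17733 — 2 statements merged into one kernel-verified Lean document; each statement's English description precedes it below -/
import Mathlib

section
/- Suppose w, κ > 0 with w > 1 or κ > 1, and let c, ω_c ∈ ℝ satisfy c²ω_c² = λ₊(ω_c), where λ₊(K) = ((1+κ)(1+w) + ρ(K))/2 and ρ(K) = sqrt((1+w)²(1−κ)² + 4κ((1−w)²+4w cos²(K))). Then 1 + κ − c²ω_c² ≠ 0; indeed |1 + κ − c²ω_c²| ≥ (1+κ)(w−1)/2 when w > 1, and |1 + κ − c²ω_c²| ≥ κ − 1 when w = 1 and κ > 1. -/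
/-!
Write `a = (1 + κ)(1 - w)`. The radicand of `ρ` rearranges to `a² + 4w((1 - κ)² + 4κ cos² K)`, so
`ρ ≥ |a|`, strictly once `w > 0` and `κ ≠ 1`; at the same time the radicand is at least
`(1 + w)²(1 - κ)²`. Since `1 + κ - λ₊ = (a - ρ)/2`, it is negative, with
`|1 + κ - λ₊| = (ρ - a)/2`. For `w > 1` this is at least `-a/2` because `ρ ≥ 0`; for `w = 1` we
have `a = 0` and `ρ ≥ 2|1 - κ|`.
-/

namespace Dispersion

open Real

noncomputable def rho (w κ K : ℝ) : ℝ :=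
  √((1 + w) ^ 2 * (1 - κ) ^ 2 + 4 * κ * ((1 - w) ^ 2 + 4 * w * cos K ^ 2))

noncomputable def lambdaPlus (w κ K : ℝ) : ℝ :=
  ((1 + κ) * (1 + w) + rho w κ K) / 2

variable {w κ : ℝ} (K : ℝ)

theorem rho_nonneg : 0 ≤ rho w κ K := sqrt_nonneg _

theorem rho_eq_sqrt :
    rho w κ K = √(((1 + κ) * (1 - w)) ^ 2 + 4 * w * ((1 - κ) ^ 2 + 4 * κ * cos K ^ 2)) := by
  unfold rho
  congr 1
  ring

theorem one_add_sub_lambdaPlus :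
    1 + κ - lambdaPlus w κ K = ((1 + κ) * (1 - w) - rho w κ K) / 2 := by
  unfold lambdaPlus
  ring

theorem mul_abs_le_rho (hw : 0 ≤ w) (hκ : 0 ≤ κ) : (1 + w) * |1 - κ| ≤ rho w κ K := by
  rw [← abs_of_nonneg (by linarith : 0 ≤ 1 + w), ← abs_mul]
  refine abs_le_sqrt ?_
  rw [mul_pow]
  exact le_add_of_nonneg_right (by positivity)

theorem abs_le_rho (hw : 0 ≤ w) (hκ : 0 ≤ κ) : |(1 + κ) * (1 - w)| ≤ rho w κ K := by
  rw [rho_eq_sqrt]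
  exact abs_le_sqrt (le_add_of_nonneg_right (by positivity))

theorem abs_lt_rho (hw : 0 < w) (hκ : 0 ≤ κ) (hκ1 : κ ≠ 1) :
    |(1 + κ) * (1 - w)| < rho w κ K := by
  rw [rho_eq_sqrt]
  refine lt_sqrt_of_sq_lt ?_
  have : 0 < (1 - κ) ^ 2 := by
    have := sub_ne_zero.mpr hκ1.symm
    positivity
  rw [sq_abs]
  exact lt_add_of_pos_right _ (by positivity)

theorem one_add_sub_lambdaPlus_neg (hw : 0 < w) (hκ : 0 ≤ κ) (h : 1 < w ∨ κ ≠ 1) :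
    1 + κ - lambdaPlus w κ K < 0 := by
  rw [one_add_sub_lambdaPlus]
  rcases h with hw1 | hκ1
  · nlinarith [rho_nonneg (w := w) (κ := κ) K]
  · linarith [le_abs_self ((1 + κ) * (1 - w)), abs_lt_rho K hw hκ hκ1]

theorem abs_one_add_sub_lambdaPlus (hw : 0 ≤ w) (hκ : 0 ≤ κ) :
    |1 + κ - lambdaPlus w κ K| = (rho w κ K - (1 + κ) * (1 - w)) / 2 := by
  rw [one_add_sub_lambdaPlus, abs_of_nonpos]
  · ring
  · linarith [le_abs_self ((1 + κ) * (1 - w)), abs_le_rho K hw hκ]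

end Dispersion

open Dispersion in
/-- Under the dispersion relation c²ω_c² = λ₊(ω_c), the quantity 1+κ−c²ω_c² is nonzero,
    with uniform lower bounds. -/
theorem stmt2 (w κ c ω : ℝ) (hw : 0 < w) (hκ : 0 < κ) (h1 : 1 < w ∨ 1 < κ)
    (hdisp : c ^ 2 * ω ^ 2 =
      ((1 + κ) * (1 + w) +
        Real.sqrt ((1 + w) ^ 2 * (1 - κ) ^ 2
          + 4 * κ * ((1 - w) ^ 2 + 4 * w * (Real.cos ω) ^ 2))) / 2) :
    1 + κ - c ^ 2 * ω ^ 2 ≠ 0 ∧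
    (1 < w → (1 + κ) * (w - 1) / 2 ≤ |1 + κ - c ^ 2 * ω ^ 2|) ∧
    (w = 1 → 1 < κ → κ - 1 ≤ |1 + κ - c ^ 2 * ω ^ 2|) := by
  change c ^ 2 * ω ^ 2 = lambdaPlus w κ ω at hdisp
  rw [hdisp, abs_one_add_sub_lambdaPlus ω hw.le hκ.le]
  refine ⟨(one_add_sub_lambdaPlus_neg ω hw hκ.le (h1.imp_right ne_of_gt)).ne, fun _ => ?_,
    fun hw1 _ => ?_⟩
  · linarith [rho_nonneg (w := w) (κ := κ) ω]
  · subst hw1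
    have := mul_abs_le_rho ω zero_le_one hκ.le
    linarith [neg_abs_le (1 - κ)]
end

section
/- Let w, κ > 0 and suppose c, ω_c satisfy c²ω_c² = λ₊(ω_c). Set v₁ = e^{iω_c} + κe^{−iω_c} and v₂ = 1 + κ − c²ω_c². Then w|v₁|² + v₂² = −ρ(ω_c)·v₂, where ρ(K) = sqrt((1+w)²(1−κ)² + 4κ((1−w)² + 4w cos²(K))). -/
/-!
The radicand of `ρ` equals `((1 + κ)(1 - w))² + 4w|v₁|²`, and the dispersion relation says
`v₂ = ((1 + κ)(1 - w) - ρ) / 2`. Hence `v₂` is a root of `x² + ρx + w|v₁|²`.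
-/

open Complex in
theorem Complex.norm_exp_mul_I_add_mul_exp_neg_sq (κ ω : ℝ) :
    ‖exp (I * ω) + κ * exp (-(I * ω))‖ ^ 2 = (1 - κ) ^ 2 + 4 * κ * Real.cos ω ^ 2 := by
  have hsum : exp (I * ω) + κ * exp (-(I * ω)) =
      ((1 + κ) * Real.cos ω : ℝ) + ((1 - κ) * Real.sin ω : ℝ) * I := by
    rw [mul_comm I, ← neg_mul, exp_mul_I, exp_mul_I, cos_neg, sin_neg, ← ofReal_cos, ← ofReal_sin]
    push_cast
    ring
  rw [Complex.sq_norm, hsum, normSq_add_mul_I]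
  linear_combination (1 - κ) ^ 2 * Real.sin_sq_add_cos_sq ω

theorem add_sq_eq_neg_mul_of_sq_eq_sq_add {a ρ m v : ℝ} (hρ : ρ ^ 2 = a ^ 2 + 4 * m)
    (hv : v = (a - ρ) / 2) : m + v ^ 2 = -ρ * v := by
  subst hv
  linear_combination (-1 / 4 : ℝ) * hρ

theorem stmt6_general (w κ c ω : ℝ) (hw : 0 < w)
    (hdisp : c ^ 2 * ω ^ 2 =
      ((1 + κ) * (1 + w) +
        Real.sqrt ((1 + w) ^ 2 * (1 - κ) ^ 2
          + 4 * κ * ((1 - w) ^ 2 + 4 * w * (Real.cos ω) ^ 2))) / 2) :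
    let v₁ : ℂ := Complex.exp (Complex.I * ω) + κ * Complex.exp (-(Complex.I * ω))
    let v₂ : ℝ := 1 + κ - c ^ 2 * ω ^ 2
    let ρ : ℝ := Real.sqrt ((1 + w) ^ 2 * (1 - κ) ^ 2
          + 4 * κ * ((1 - w) ^ 2 + 4 * w * (Real.cos ω) ^ 2))
    w * ‖v₁‖ ^ 2 + v₂ ^ 2 = -ρ * v₂ := by
  intro v₁ v₂ ρ
  have hradicand : (1 + w) ^ 2 * (1 - κ) ^ 2 + 4 * κ * ((1 - w) ^ 2 + 4 * w * Real.cos ω ^ 2) =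
      ((1 + κ) * (1 - w)) ^ 2 + 4 * (w * ‖v₁‖ ^ 2) := by
    rw [Complex.norm_exp_mul_I_add_mul_exp_neg_sq]
    ring
  have hρ : ρ ^ 2 = ((1 + κ) * (1 - w)) ^ 2 + 4 * (w * ‖v₁‖ ^ 2) := by
    rw [Real.sq_sqrt (hradicand ▸ by positivity), hradicand]
  exact add_sq_eq_neg_mul_of_sq_eq_sq_add hρ (by simp only [v₂, hdisp, ρ]; ring)

/-- With v₁ = e^{iω_c}+κe^{−iω_c}, v₂ = 1+κ−c²ω_c², one has w|v₁|² + v₂² = −ρ(ω_c)v₂. -/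
theorem stmt6 (w κ c ω : ℝ) (hw : 0 < w) (hκ : 0 < κ)
    (hdisp : c ^ 2 * ω ^ 2 =
      ((1 + κ) * (1 + w) +
        Real.sqrt ((1 + w) ^ 2 * (1 - κ) ^ 2
          + 4 * κ * ((1 - w) ^ 2 + 4 * w * (Real.cos ω) ^ 2))) / 2) :
    let v₁ : ℂ := Complex.exp (Complex.I * ω) + κ * Complex.exp (-(Complex.I * ω))
    let v₂ : ℝ := 1 + κ - c ^ 2 * ω ^ 2
    let ρ : ℝ := Real.sqrt ((1 + w) ^ 2 * (1 - κ) ^ 2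
          + 4 * κ * ((1 - w) ^ 2 + 4 * w * (Real.cos ω) ^ 2))
    w * ‖v₁‖ ^ 2 + v₂ ^ 2 = -ρ * v₂ :=
  stmt6_general w κ c ω hw hdisp
end
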